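/- For finite diagrams C, D with n points matched optimally, and any nonnegative ψ with all ψᵢ^C = ψᵢ^D (i.e., ψ takes identical values under the matching), ‖P(C,ψ,Σ) − P(D,ψ,Σ)‖₁ ≤ 2·Ψ·W∞(C,D), where Ψ = Σᵢ ψᵢ. -/

import Mathlib

open MeasureTheory Set Finset

lemma intInd (a b : ℝ) : Integrable ((Set.Ico a b).indicator (1 : ℝ → ℝ)) := by
  rw [integrable_indicator_iff measurableSet_Ico]
  refine (integrableOn_const_iff (C := (1:ℝ))).mpr (Or.inr ?_)
  simp [Real.volume_Ico]

lemma intIndVal (a b : ℝ) (hab : a ≤ b) :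
    (∫ t : ℝ, (Set.Ico a b).indicator (1 : ℝ → ℝ) t) = b - a := by
  have : (1 : ℝ → ℝ) = fun _ => (1 : ℝ) := rfl
  rw [this, MeasureTheory.integral_indicator_const (1:ℝ) measurableSet_Ico]
  simp [Real.volume_Ico, ENNReal.toReal_ofReal (sub_nonneg.mpr hab), hab]

lemma ind_abs_le (a b c d t : ℝ) :
    |(Set.Ico a b).indicator (1:ℝ→ℝ) t - (Set.Ico c d).indicator 1 t| ≤
      (Set.Ico (min a c) (max a c)).indicator 1 t +
      (Set.Ico (min b d) (max b d)).indicator 1 t := by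
  have n1 : (0:ℝ) ≤ (Set.Ico (min a c) (max a c)).indicator (1:ℝ→ℝ) t :=
    Set.indicator_nonneg (fun _ _ => zero_le_one) t
  have n2 : (0:ℝ) ≤ (Set.Ico (min b d) (max b d)).indicator (1:ℝ→ℝ) t :=
    Set.indicator_nonneg (fun _ _ => zero_le_one) t
  by_cases h1 : t ∈ Set.Ico a b <;> by_cases h2 : t ∈ Set.Ico c d
  · simp [h1, h2]; linarith
  · simp [h1, h2]
    simp only [Set.mem_Ico, not_and, not_lt, not_le] at h1 h2
    rcases lt_or_ge t c with hc | hc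
    · have : t ∈ Set.Ico (min a c) (max a c) :=
        ⟨le_trans (min_le_left _ _) h1.1, lt_of_lt_of_le hc (le_max_right _ _)⟩
      simp [this]; linarith
    · have hd := h2 hc
      have : t ∈ Set.Ico (min b d) (max b d) :=
        ⟨le_trans (min_le_right _ _) hd, lt_of_lt_of_le h1.2 (le_max_left _ _)⟩
      simp [this]; linarith
  · simp [h1, h2]
    simp only [Set.mem_Ico, not_and, not_lt, not_le] at h1 h2
    rcases lt_or_ge t a with ha | ha
    · have : t ∈ Set.Ico (min a c) (max a c) :=
        ⟨le_trans (min_le_right _ _) h2.1, lt_of_lt_of_le ha (le_max_left _ _)⟩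
      simp [this]; linarith
    · have hb := h1 ha
      have : t ∈ Set.Ico (min b d) (max b d) :=
        ⟨le_trans (min_le_left _ _) hb, lt_of_lt_of_le h2.2 (le_max_right _ _)⟩
      simp [this]; linarith
  · simp [h1, h2]; linarith

/-- Specialization of the general persistence-curve bound when `ψ` takes
identical values under the optimal matching: for nonnegative weights
`ψᵢ^C = ψᵢ^D = ψᵢ`,
`‖P(C,ψ,Σ) − P(D,ψ,Σ)‖₁ ≤ 2·Ψ·W∞(C,D)` with `Ψ = Σᵢ ψᵢ`. -/
theorem persistence_curve_equal_weights_bound (n : ℕ)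
    (bC dC bD dD ψ : Fin n → ℝ)
    (hCbd : ∀ i, bC i ≤ dC i) (hDbd : ∀ i, bD i ≤ dD i)
    (hψ : ∀ i, 0 ≤ ψ i)
    (W : ℝ)  -- the bottleneck distance `W∞(C, D)`
    (hmatch : ∀ i, max |bC i - bD i| |dC i - dD i| ≤ W)
    (PC PD : ℝ → ℝ)
    (hPC : PC = fun t => ∑ i, ψ i * (Set.Ico (bC i) (dC i)).indicator 1 t)
    (hPD : PD = fun t => ∑ i, ψ i * (Set.Ico (bD i) (dD i)).indicator 1 t)
    (Ψ : ℝ) (hΨ : Ψ = ∑ i, ψ i) :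
    (∫ t : ℝ, |PC t - PD t|) ≤ 2 * Ψ * W := by
  subst hPC hPD hΨ
  -- the dominating function
  set g : ℝ → ℝ := fun t => ∑ i, ψ i *
      ((Set.Ico (min (bC i) (bD i)) (max (bC i) (bD i))).indicator 1 t +
       (Set.Ico (min (dC i) (dD i)) (max (dC i) (dD i))).indicator 1 t) with hg
  have hint : ∀ i : Fin n, Integrable (fun t : ℝ => ψ i *
      ((Set.Ico (min (bC i) (bD i)) (max (bC i) (bD i))).indicator 1 t +
       (Set.Ico (min (dC i) (dD i)) (max (dC i) (dD i))).indicator 1 t)) :=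
    fun i => (((intInd _ _).add (intInd _ _)).const_mul (ψ i))
  have hgint : Integrable g := by
    rw [hg]
    exact integrable_finset_sum _ (fun i _ => hint i)
  have hPCint : Integrable (fun t : ℝ => ∑ i, ψ i * (Set.Ico (bC i) (dC i)).indicator 1 t) :=
    integrable_finset_sum _ (fun i _ => (intInd _ _).const_mul _)
  have hPDint : Integrable (fun t : ℝ => ∑ i, ψ i * (Set.Ico (bD i) (dD i)).indicator 1 t) :=
    integrable_finset_sum _ (fun i _ => (intInd _ _).const_mul _)
  have hptwise : ∀ t : ℝ,
      |(∑ i, ψ i * (Set.Ico (bC i) (dC i)).indicator 1 t) -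
       (∑ i, ψ i * (Set.Ico (bD i) (dD i)).indicator 1 t)| ≤ g t := by
    intro t
    rw [← Finset.sum_sub_distrib]
    calc |∑ i, (ψ i * (Set.Ico (bC i) (dC i)).indicator 1 t -
            ψ i * (Set.Ico (bD i) (dD i)).indicator 1 t)|
        ≤ ∑ i, |ψ i * (Set.Ico (bC i) (dC i)).indicator 1 t -
            ψ i * (Set.Ico (bD i) (dD i)).indicator 1 t| :=
          Finset.abs_sum_le_sum_abs _ _
      _ ≤ g t := by
          rw [hg]
          refine Finset.sum_le_sum (fun i _ => ?_)
          rw [← mul_sub, abs_mul, abs_of_nonneg (hψ i)]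
          exact mul_le_mul_of_nonneg_left (ind_abs_le _ _ _ _ t) (hψ i)
  have step1 : (∫ t : ℝ, |(∑ i, ψ i * (Set.Ico (bC i) (dC i)).indicator 1 t) -
       (∑ i, ψ i * (Set.Ico (bD i) (dD i)).indicator 1 t)|) ≤ ∫ t, g t := by
    refine integral_mono ((hPCint.sub hPDint).abs) hgint hptwise
  refine le_trans step1 ?_
  have : (∫ t, g t) = ∑ i, ψ i * (|bC i - bD i| + |dC i - dD i|) := by
    rw [hg, integral_finset_sum _ (fun i _ => hint i)]
    refine Finset.sum_congr rfl (fun i _ => ?_)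
    rw [integral_const_mul, integral_add (intInd _ _) (intInd _ _),
      intIndVal _ _ (min_le_max), intIndVal _ _ (min_le_max)]
    rw [max_sub_min_eq_abs, max_sub_min_eq_abs, abs_sub_comm (bD i), abs_sub_comm (dD i)]
  rw [this]
  calc ∑ i, ψ i * (|bC i - bD i| + |dC i - dD i|)
      ≤ ∑ i, ψ i * (2 * W) := by
        refine Finset.sum_le_sum (fun i _ => mul_le_mul_of_nonneg_left ?_ (hψ i))
        have h := hmatch i
        have h1 : |bC i - bD i| ≤ W := le_trans (le_max_left _ _) h
        have h2 : |dC i - dD i| ≤ W := le_trans (le_max_right _ _) h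
        linarith
    _ = 2 * (∑ i, ψ i) * W := by rw [← Finset.sum_mul]; ring
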